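/- Let ε ≥ 0, 0 ≤ δ < 1, and 0 < p < e^{−ε}(1−δ). Then the crediting rollout G̃_p of the counterexample predictor M̃_p is not (ε,δ)-CCA: on the empty prompt λ, Pr[G̃_p({s1}, λ) credits s1] < 1, the conditional distribution of G̃_p({s1}, λ) given s1 not credited places probability 1 on the outcome (ab⊥, ∅), but G̃_p(∅, λ) places probability p < e^{−ε}(1−δ) on (ab⊥, ∅), so the (ε,δ)-closeness condition fails. -/

import Mathlib

/-! On the empty prompt every rollout of `M̃_p` stops after exactly three tokens, so its output
distribution is a finite sum over four traces. With `s₁` present, the prefix `b` is always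
followed by a credited `a`, so the only uncredited outcome of positive probability is
`(ab⊥, ∅)`, which therefore has conditional mass `1`; without `s₁` that outcome has mass `p`,
and `1 ≤ e^ε p + δ` contradicts `p < e^{-ε}(1 - δ)`. -/

open scoped ENNReal Classical

noncomputable section

namespace CCA

variable {α X D Y : Type*}

/-- Conditional probability of an event `E` given event `B`, for a set function `P`. -/
def prCond (P : Set α → ℝ≥0∞) (B : Set α) : Set α → ℝ≥0∞ := fun E => P (E ∩ B) / P B

/-- `(ε,δ)`-closeness of two set functions, as in differential privacy. -/
def Close (ε δ : ℝ) (P Q : Set α → ℝ≥0∞) : Prop :=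
  ∀ E : Set α,
    P E ≤ ENNReal.ofReal (Real.exp ε) * Q E + ENNReal.ofReal δ ∧
    Q E ≤ ENNReal.ofReal (Real.exp ε) * P E + ENNReal.ofReal δ

/-- `(ε,δ)`-counterfactual credit attribution for a kernel `K` mapping a dataset `S` and a
prompt `x` to a (sub)probability set function over (output, credit set) pairs: for every
prompt, dataset and `s ∈ S`, either `s` is credited with probability `1`, or the conditional
distribution given `s` not credited is `(ε,δ)`-close to the counterfactual on `S \ {s}`. -/
def IsCCA (ε δ : ℝ) (K : Set D → List X → Set (Y × Set D) → ℝ≥0∞) : Prop :=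
  ∀ (S : Set D) (x : List X) (s : D), s ∈ S →
    K S x {q | s ∈ q.2} = 1 ∨
    Close ε δ (prCond (K S x) {q | s ∉ q.2}) (K (S \ {s}) x)

/-- The event kernel associated with a PMF-valued crediting algorithm. -/
def pmfKernel (M : Set D → List X → PMF (Y × Set D)) :
    Set D → List X → Set (Y × Set D) → ℝ≥0∞ :=
  fun S x E => (M S x).toOuterMeasure E

/-- Probability that the crediting rollout of `M` on current prompt `x` produces exactly the
trace `w` of (token, credit set) pairs. -/
def traceProb (M : Set D → List X → PMF (X × Set D)) (S : Set D) :
    List X → List (X × Set D) → ℝ≥0∞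
  | _, [] => 1
  | x, q :: w => M S x q * traceProb M S (x ++ [q.1]) w

/-- A terminal trace: the last generated token is `bot` and no earlier token is `bot`. -/
def IsTerminal (bot : X) (w : List (X × Set D)) : Prop :=
  (w.map Prod.fst).getLast? = some bot ∧ ∀ y ∈ (w.map Prod.fst).dropLast, y ≠ bot

/-- The union of the credit sets appearing along a trace. -/
def creditOf (w : List (X × Set D)) : Set D := w.foldr (fun q acc => q.2 ∪ acc) ∅

/-- Probability that the crediting rollout of `M` on `(S, x0)` outputs the
(generated string, credit set) pair `o`. -/
def rolloutProb (bot : X) (M : Set D → List X → PMF (X × Set D)) (S : Set D)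
    (x0 : List X) (o : List X × Set D) : ℝ≥0∞ :=
  ∑' w : {w : List (X × Set D) //
      IsTerminal bot w ∧ x0 ++ w.map Prod.fst = o.1 ∧ creditOf w = o.2},
    traceProb M S x0 w.1

/-- Event kernel of the crediting rollout of `M`. -/
def rolloutK (bot : X) (M : Set D → List X → PMF (X × Set D)) :
    Set D → List X → Set (List X × Set D) → ℝ≥0∞ :=
  fun S x0 E => ∑' o : E, rolloutProb bot M S x0 ↑o

/-- Coin flip: `true` with probability `min p 1`. -/
def coin (p : ℝ≥0∞) : PMF Bool := PMF.bernoulli (min p 1).toNNReal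
  ((ENNReal.toNNReal_mono ENNReal.one_ne_top (min_le_right _ _)).trans_eq ENNReal.toNNReal_one)

/-- Two-point distribution: `x` with probability `p` (clipped at `1`), else `y`. -/
def twoPoint (p : ℝ≥0∞) (x y : α) : PMF α := PMF.map (fun b => if b then x else y) (coin p)

/-- The token alphabet `{a, b, ⊥}` of the counterexample predictor. -/
inductive Tok : Type
  | a : Tok
  | b : Tok
  | bot : Tok
deriving DecidableEq

/-- The counterexample crediting next-token predictor `M̃_p`, over the data universe
`Unit = {s1}` (datasets and credit sets are `Set Unit`, with `{()} = {s1}`). -/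
def Mp (p : ℝ) (S : Set Unit) (x : List Tok) : PMF (Tok × Set Unit) :=
  if x = [] then twoPoint (ENNReal.ofReal p) (Tok.a, (∅ : Set Unit)) (Tok.b, ∅)
  else if x = [Tok.a] then
    if S = ∅ then PMF.pure (Tok.b, ∅)
    else twoPoint (1 / 2) (Tok.a, Set.univ) (Tok.b, ∅)
  else if x = [Tok.b] then
    if S = ∅ then PMF.pure (Tok.a, ∅) else PMF.pure (Tok.a, Set.univ)
  else PMF.pure (Tok.bot, ∅)

section Rollout

def traceOutcome (x0 : List X) (w : List (X × Set D)) : List X × Set D :=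
  (x0 ++ w.map Prod.fst, creditOf w)

theorem rolloutK_eq_tsum (bot : X) (M : Set D → List X → PMF (X × Set D)) (S : Set D)
    (x0 : List X) (E : Set (List X × Set D)) :
    rolloutK bot M S x0 E =
      ∑' w : {w | IsTerminal bot w ∧ traceOutcome x0 w ∈ E}, traceProb M S x0 w := by
  let e : (Σ o : E, {w : List (X × Set D) //
      IsTerminal bot w ∧ x0 ++ w.map Prod.fst = o.1.1 ∧ creditOf w = o.1.2}) ≃
      {w | IsTerminal bot w ∧ traceOutcome x0 w ∈ E} :=
    { toFun := fun x => ⟨x.2.1, x.2.2.1, by rw [traceOutcome, x.2.2.2.1, x.2.2.2.2]; exact x.1.2⟩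
      invFun := fun w => ⟨⟨traceOutcome x0 w.1, w.2.2⟩, w.1, w.2.1, rfl, rfl⟩
      left_inv := by
        rintro ⟨⟨⟨o1, o2⟩, ho⟩, w, hT, h1, h2⟩
        dsimp only at h1 h2
        subst h1 h2
        rfl
      right_inv := fun _ => rfl }
  rw [rolloutK, ← e.tsum_eq, ENNReal.tsum_sigma']
  rfl

theorem rolloutK_eq_sum {bot : X} {M : Set D → List X → PMF (X × Set D)} {S : Set D}
    {x0 : List X} (T : Finset (List (X × Set D)))
    (hT : ∀ w, IsTerminal bot w → traceProb M S x0 w ≠ 0 → w ∈ T) (E : Set (List X × Set D)) :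
    rolloutK bot M S x0 E =
      ∑ w ∈ T with IsTerminal bot w ∧ traceOutcome x0 w ∈ E, traceProb M S x0 w := by
  rw [rolloutK_eq_tsum, tsum_subtype {w | IsTerminal bot w ∧ traceOutcome x0 w ∈ E}
    (traceProb M S x0), Finset.sum_filter, tsum_eq_sum (s := T)]
  · simp only [Set.indicator_apply, Set.mem_ofPred_eq]
  · intro w hw
    by_contra hne
    obtain ⟨hw', hne⟩ := Set.indicator_apply_ne_zero.1 hne
    exact hw (hT w hw'.1 hne)

end Rollout

section TwoPoint

variable {q : ℝ≥0∞} {x y z : α}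

set_option linter.deprecated false in
theorem coin_apply (b : Bool) : coin q b = if b then min q 1 else 1 - min q 1 := by
  have hq : min q 1 ≠ ⊤ := ne_top_of_le_ne_top ENNReal.one_ne_top (min_le_right q 1)
  cases b <;> simp [coin, PMF.bernoulli, hq]

theorem twoPoint_apply_left (h : x ≠ y) : twoPoint q x y x = min q 1 := by
  simp [twoPoint, PMF.map_apply, coin_apply, h]

theorem twoPoint_apply_right (h : x ≠ y) : twoPoint q x y y = 1 - min q 1 := by
  simp [twoPoint, PMF.map_apply, coin_apply, h.symm]

theorem twoPoint_apply_of_ne (hx : z ≠ x) (hy : z ≠ y) : twoPoint q x y z = 0 := by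
  simp [twoPoint, PMF.map_apply, hx, hy]

end TwoPoint

theorem not_close_of_apply_eq {ε δ r : ℝ} {P Q : Set α → ℝ≥0∞} (E : Set α)
    (hP : P E = 1) (hQ : Q E = ENNReal.ofReal r) (hr : 0 ≤ r) (hδ : 0 ≤ δ)
    (hlt : Real.exp ε * r + δ < 1) : ¬ Close ε δ P Q := by
  intro hC
  have h := (hC E).1
  rw [hP, hQ, ← ENNReal.ofReal_mul (Real.exp_nonneg ε),
    ← ENNReal.ofReal_add (by positivity) hδ, ENNReal.one_le_ofReal] at h
  linarith

theorem mul_inv_two_add_one_sub_lt_one {x : ℝ≥0∞} (h0 : x ≠ 0) (h1 : x ≤ 1) :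
    x * 2⁻¹ + (1 - x) < 1 := by
  have hx : x ≠ ⊤ := ne_top_of_le_ne_top ENNReal.one_ne_top h1
  calc x * 2⁻¹ + (1 - x) < x + (1 - x) := by
        gcongr
        · exact ENNReal.sub_ne_top ENNReal.one_ne_top
        · rw [← div_eq_mul_inv]; exact ENNReal.half_lt_self h0 hx
    _ = 1 := add_tsub_cancel_of_le h1

section Counterexample

open Tok

variable {p : ℝ} {S : Set Unit} {q : Tok × Set Unit}

theorem Mp_nil_ne_zero (h : Mp p S [] q ≠ 0) : q = (a, ∅) ∨ q = (b, ∅) := by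
  contrapose! h
  simp [Mp, twoPoint_apply_of_ne h.1 h.2]

theorem Mp_a_ne_zero (h : Mp p S [a] q ≠ 0) : q = (a, Set.univ) ∨ q = (b, ∅) := by
  contrapose! h
  by_cases hS : S = ∅ <;> simp [Mp, hS, h.2, twoPoint_apply_of_ne h.1 h.2]

theorem Mp_b_ne_zero (h : Mp p S [b] q ≠ 0) : q = (a, Set.univ) ∨ q = (a, ∅) := by
  contrapose! h
  by_cases hS : S = ∅ <;> simp [Mp, hS, h.1, h.2]

theorem Mp_pair_ne_zero {t₁ t₂ : Tok} (h : Mp p S [t₁, t₂] q ≠ 0) : q = (bot, ∅) := by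
  contrapose! h
  simp [Mp, h]

def mpTerminalTraces : Finset (List (Tok × Set Unit)) :=
  {[(a, ∅), (a, Set.univ), (bot, ∅)], [(a, ∅), (b, ∅), (bot, ∅)],
    [(b, ∅), (a, Set.univ), (bot, ∅)], [(b, ∅), (a, ∅), (bot, ∅)]}

theorem mem_mpTerminalTraces {w : List (Tok × Set Unit)} (hT : IsTerminal bot w)
    (hw : traceProb (Mp p) S [] w ≠ 0) : w ∈ mpTerminalTraces := by
  obtain ⟨hlast, hdrop⟩ := hT
  rcases w with _ | ⟨q₁, _ | ⟨q₂, _ | ⟨q₃, rest⟩⟩⟩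
  · simp at hlast
  · simp only [traceProb, mul_one] at hw
    rcases Mp_nil_ne_zero hw with rfl | rfl <;> simp at hlast
  · simp only [traceProb, mul_one, mul_ne_zero_iff] at hw
    obtain ⟨h₁, h₂⟩ := hw
    rcases Mp_nil_ne_zero h₁ with rfl | rfl
    · rcases Mp_a_ne_zero h₂ with rfl | rfl <;> simp at hlast
    · rcases Mp_b_ne_zero h₂ with rfl | rfl <;> simp at hlast
  · simp only [traceProb, mul_ne_zero_iff] at hw
    obtain ⟨h₁, h₂, h₃, -⟩ := hw
    obtain rfl := Mp_pair_ne_zero h₃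
    obtain rfl : rest = [] := by
      rcases rest with _ | ⟨q₄, rest⟩
      · rfl
      · exact absurd rfl (hdrop bot (by simp))
    rcases Mp_nil_ne_zero h₁ with rfl | rfl
    · rcases Mp_a_ne_zero h₂ with rfl | rfl <;> simp [mpTerminalTraces]
    · rcases Mp_b_ne_zero h₂ with rfl | rfl <;> simp [mpTerminalTraces]

theorem rolloutK_Mp_eq_sum (E : Set (List Tok × Set Unit)) :
    rolloutK bot (Mp p) S [] E =
      ∑ w ∈ mpTerminalTraces with IsTerminal bot w ∧ traceOutcome [] w ∈ E,
        traceProb (Mp p) S [] w :=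
  rolloutK_eq_sum mpTerminalTraces (fun _ => mem_mpTerminalTraces) E

theorem rolloutK_Mp_singleton (E : Set (List Tok × Set Unit)) :
    rolloutK bot (Mp p) {()} [] E =
      (if ([a, a, bot], Set.univ) ∈ E then min (ENNReal.ofReal p) 1 * 2⁻¹ else 0) +
      (if ([a, b, bot], ∅) ∈ E then min (ENNReal.ofReal p) 1 * 2⁻¹ else 0) +
      (if ([b, a, bot], Set.univ) ∈ E then 1 - min (ENNReal.ofReal p) 1 else 0) := by
  simp [rolloutK_Mp_eq_sum, mpTerminalTraces, Finset.sum_filter, IsTerminal, traceOutcome,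
    creditOf, traceProb, Mp, twoPoint_apply_left, twoPoint_apply_right, Set.empty_ne_univ, add_assoc]

theorem rolloutK_Mp_empty (E : Set (List Tok × Set Unit)) :
    rolloutK bot (Mp p) ∅ [] E =
      (if ([a, b, bot], ∅) ∈ E then min (ENNReal.ofReal p) 1 else 0) +
      (if ([b, a, bot], ∅) ∈ E then 1 - min (ENNReal.ofReal p) 1 else 0) := by
  simp [rolloutK_Mp_eq_sum, mpTerminalTraces, Finset.sum_filter, IsTerminal, traceOutcome,
    creditOf, traceProb, Mp, twoPoint_apply_left, twoPoint_apply_right]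

end Counterexample

theorem stmt2_general (ε δ p : ℝ) (hε : 0 ≤ ε) (hδ0 : 0 ≤ δ)
    (hp0 : 0 < p) (hp : p < Real.exp (-ε) * (1 - δ)) :
    rolloutK Tok.bot (Mp p) {()} [] {q : List Tok × Set Unit | () ∈ q.2} < 1 ∧
    prCond (rolloutK Tok.bot (Mp p) {()} []) {q | () ∉ q.2}
        {([Tok.a, Tok.b, Tok.bot], (∅ : Set Unit))} = 1 ∧
    rolloutK Tok.bot (Mp p) ∅ [] {([Tok.a, Tok.b, Tok.bot], (∅ : Set Unit))} =
        ENNReal.ofReal p ∧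
    ¬ Close ε δ (prCond (rolloutK Tok.bot (Mp p) {()} []) {q | () ∉ q.2})
        (rolloutK Tok.bot (Mp p) ∅ []) := by
  have hlt : Real.exp ε * p + δ < 1 := by
    have := mul_lt_mul_of_pos_left hp (Real.exp_pos ε)
    rw [← mul_assoc, ← Real.exp_add, add_neg_cancel, Real.exp_zero, one_mul] at this
    linarith
  have hp1 : ENNReal.ofReal p ≤ 1 := by
    have : p ≤ Real.exp ε * p := le_mul_of_one_le_left hp0.le (Real.one_le_exp hε)
    exact ENNReal.ofReal_le_one.2 (by linarith)
  have hP0 : ENNReal.ofReal p ≠ 0 := (ENNReal.ofReal_pos.2 hp0).ne'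
  have hcond : prCond (rolloutK Tok.bot (Mp p) {()} []) {q | () ∉ q.2}
      {([Tok.a, Tok.b, Tok.bot], (∅ : Set Unit))} = 1 := by
    have hab : rolloutK Tok.bot (Mp p) {()} []
        ({([Tok.a, Tok.b, Tok.bot], ∅)} ∩ {q | () ∉ q.2}) = ENNReal.ofReal p * 2⁻¹ := by
      simp [rolloutK_Mp_singleton, hp1]
    have hnot : rolloutK Tok.bot (Mp p) {()} [] {q | () ∉ q.2} = ENNReal.ofReal p * 2⁻¹ := by
      simp [rolloutK_Mp_singleton, hp1]
    rw [prCond, hab, hnot]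
    exact ENNReal.div_self (mul_ne_zero hP0 (by simp)) (by finiteness)
  have hcounter : rolloutK Tok.bot (Mp p) ∅ [] {([Tok.a, Tok.b, Tok.bot], (∅ : Set Unit))} =
      ENNReal.ofReal p := by
    simp [rolloutK_Mp_empty, hp1]
  refine ⟨?_, hcond, hcounter, not_close_of_apply_eq _ hcond hcounter hp0.le hδ0 hlt⟩
  simpa [rolloutK_Mp_singleton, hp1] using mul_inv_two_add_one_sub_lt_one hP0 hp1

/-- For `ε ≥ 0`, `0 ≤ δ < 1` and `0 < p < e^{-ε}(1-δ)`, the crediting rollout `G̃_p` of the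
counterexample predictor `M̃_p` is not `(ε,δ)`-CCA: on the empty prompt, `s1` is credited with
probability `< 1`, the conditional distribution given `s1` not credited puts mass `1` on the
outcome `(ab⊥, ∅)`, the counterfactual puts mass `p < e^{-ε}(1-δ)` on it, and
`(ε,δ)`-closeness fails. -/
theorem stmt2 (ε δ p : ℝ) (hε : 0 ≤ ε) (hδ0 : 0 ≤ δ) (hδ1 : δ < 1)
    (hp0 : 0 < p) (hp : p < Real.exp (-ε) * (1 - δ)) :
    rolloutK Tok.bot (Mp p) {()} [] {q : List Tok × Set Unit | () ∈ q.2} < 1 ∧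
    prCond (rolloutK Tok.bot (Mp p) {()} []) {q | () ∉ q.2}
        {([Tok.a, Tok.b, Tok.bot], (∅ : Set Unit))} = 1 ∧
    rolloutK Tok.bot (Mp p) ∅ [] {([Tok.a, Tok.b, Tok.bot], (∅ : Set Unit))} =
        ENNReal.ofReal p ∧
    ¬ Close ε δ (prCond (rolloutK Tok.bot (Mp p) {()} []) {q | () ∉ q.2})
        (rolloutK Tok.bot (Mp p) ∅ []) :=
  stmt2_general ε δ p hε hδ0 hp0 hp

end CCA
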